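/- arXiv:1812.03641 — 8 statements merged into one kernel-verified Lean document; each statement's English description precedes it below -/
import Mathlib

section
/- Let G be a finite group, K a normal subgroup of G, and x ∈ G an element whose order is coprime to |K|. Then the centralizer of xK in G/K equals the image of C_G(x)K/K, i.e., C_{G/K}(xK) = C_G(x)K/K. -/
/-!
For `x` of prime-power order `p ^ a`, if `gK` commutes with `xK` then `y = g x g⁻¹` lies
in `xK`. In `H = K⟨x⟩` both `x` and `y` are `p`-elements, so `y` lies in a conjugate
`c P c⁻¹` of a Sylow `p`-subgroup `P ∋ x`. Writing `c = k z` with `k ∈ K`, `z ∈ P` gives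
`k⁻¹ y k ∈ P`; as `P ∩ K = 1` and `k⁻¹ y k ≡ x` modulo `K`, we get `k⁻¹ y k = x`, so `k⁻¹ g`
centralizes `x`. The general case is an induction over coprime factorizations `|x| = a b`:
after moving `g` into `C_G(x ^ b)` one applies the statement for `b` inside that centralizer
to `x ^ a`, and an element commuting with `x ^ a` and `x ^ b` commutes with `x`.
-/

open scoped commutatorElement

open Subgroup

section

variable {G : Type*} [Group G]

theorem QuotientGroup.commute_mk_iff {K : Subgroup G} [K.Normal] {g x : G} :
    Commute (g : G ⧸ K) x ↔ ⁅g, x⁆ ∈ K := by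
  rw [← commutatorElement_eq_one_iff_commute, ← QuotientGroup.eq_one_iff]
  rfl

theorem QuotientGroup.eq_of_mk_eq_of_disjoint {H K : Subgroup G} [K.Normal]
    (hHK : Disjoint H K) {a b : G} (ha : a ∈ H) (hb : b ∈ H) (hab : (a : G ⧸ K) = b) :
    a = b := by
  rw [QuotientGroup.eq] at hab
  exact inv_mul_eq_one.mp (disjoint_def.mp hHK (mul_mem (inv_mem ha) hb) hab)

theorem Commute.of_pow_of_pow_of_coprime {g x : G} {a b : ℕ} (hab : a.Coprime b)
    (ha : Commute g (x ^ a)) (hb : Commute g (x ^ b)) : Commute g x := by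
  have hx : x = (x ^ a) ^ a.gcdA b * (x ^ b) ^ a.gcdB b := by
    rw [← zpow_natCast, ← zpow_natCast, ← zpow_mul, ← zpow_mul, ← zpow_add,
      ← Nat.gcd_eq_gcd_ab, hab.gcd_eq_one, Nat.cast_one, zpow_one]
  rw [hx]
  exact (ha.zpow_right _).mul_right (hb.zpow_right _)

variable [Finite G] {p : ℕ} [hp : Fact p.Prime]

theorem IsPGroup.disjoint_of_not_dvd {P K : Subgroup G} (hP : IsPGroup p P)
    (hK : ¬ p ∣ Nat.card K) : Disjoint P K := by
  obtain ⟨n, hn⟩ := hP.exists_card_eq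
  exact disjoint_of_coprime_natCard (hn ▸ (hp.out.coprime_iff_not_dvd.mpr hK).pow_left n)

theorem IsPGroup.exists_conj_eq_of_mk_eq_of_codisjoint {K X Y : Subgroup G} [K.Normal]
    (hK : ¬ p ∣ Nat.card K) (hX : IsPGroup p X) (hY : IsPGroup p Y) (hKX : Codisjoint K X)
    {x y : G} (hx : x ∈ X) (hy : y ∈ Y) (hxy : (x : G ⧸ K) = y) :
    ∃ k ∈ K, k * x * k⁻¹ = y := by
  obtain ⟨P, hXP⟩ := hX.exists_le_sylow
  obtain ⟨Q, hYQ⟩ := hY.exists_le_sylow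
  obtain ⟨c, rfl⟩ := MulAction.exists_smul_eq G P Q
  obtain ⟨k, hk, z, hz, rfl⟩ := mem_sup_of_normal_left.mp (hKX.eq_top ▸ mem_top c)
  have hyP : k⁻¹ * y * k ∈ (P : Subgroup G) := by
    have hy' : z⁻¹ * (k⁻¹ * y * k) * z ∈ (P : Subgroup G) := by
      have := hYQ hy
      rw [Sylow.coe_subgroup_smul, mem_pointwise_smul_iff_inv_smul_mem] at this
      simpa [MulAut.smul_def, mul_assoc] using this
    have hzP := hXP hz
    simpa [mul_assoc] using mul_mem (mul_mem hzP hy') (inv_mem hzP)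
  have hk1 : ((k : G) : G ⧸ K) = 1 := (QuotientGroup.eq_one_iff k).mpr hk
  have hx : x = k⁻¹ * y * k :=
    QuotientGroup.eq_of_mk_eq_of_disjoint (P.isPGroup'.disjoint_of_not_dvd hK) (hXP hx) hyP
      (by simp [hxy, hk1])
  exact ⟨k, hk, by rw [hx]; group⟩

theorem IsPGroup.exists_conj_eq_of_mk_eq {K X Y : Subgroup G} [K.Normal]
    (hK : ¬ p ∣ Nat.card K) (hX : IsPGroup p X) (hY : IsPGroup p Y) {x y : G} (hx : x ∈ X)
    (hy : y ∈ Y) (hxy : (x : G ⧸ K) = y) : ∃ k ∈ K, k * x * k⁻¹ = y := by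
  set H := K ⊔ X
  have hxH : x ∈ H := mem_sup_right hx
  have hxyK : x⁻¹ * y ∈ K := QuotientGroup.eq.mp hxy
  have hyH : y ∈ H := by simpa using mul_mem hxH (mem_sup_left hxyK : x⁻¹ * y ∈ H)
  obtain ⟨k, hk, hkxy⟩ := exists_conj_eq_of_mk_eq_of_codisjoint (K := K.subgroupOf H)
    (x := ⟨x, hxH⟩) (y := ⟨y, hyH⟩)
    (fun h ↦ hK (h.trans (card_comap_dvd_of_injective K H.subtype Subtype.coe_injective)))
    hX.comap_subtype hY.comap_subtype (codisjoint_subgroupOf_sup K X) hx hy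
    (QuotientGroup.eq.mpr (mem_subgroupOf.mpr hxyK))
  exact ⟨k, hk, congrArg Subtype.val hkxy⟩

end

universe u

-- Quantified over all groups of a universe so that the induction can pass to centralizers.
def CentralizerLiftsOfOrder (n : ℕ) : Prop :=
  ∀ ⦃G : Type u⦄ [Group G] [Finite G] (K : Subgroup G) [K.Normal] (x g : G),
    orderOf x = n → n.Coprime (Nat.card K) → Commute (g : G ⧸ K) x →
      ∃ k ∈ K, Commute (k * g) x

theorem centralizerLiftsOfOrder_one : CentralizerLiftsOfOrder.{u} 1 := by
  intro G _ _ K _ x g hx _ _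
  exact ⟨1, one_mem K, by simp [orderOf_eq_one_iff.mp hx]⟩

theorem centralizerLiftsOfOrder_prime_pow {p a : ℕ} (hp : p.Prime) (ha : 0 < a) :
    CentralizerLiftsOfOrder.{u} (p ^ a) := by
  intro G _ _ K _ x g hx hcop hg
  have : Fact p.Prime := ⟨hp⟩
  have hK : ¬ p ∣ Nat.card K :=
    hp.coprime_iff_not_dvd.mp (Nat.Coprime.coprime_dvd_left (dvd_pow_self p ha.ne') hcop)
  have hX : IsPGroup p (zpowers x) := .of_card (by rw [Nat.card_zpowers, hx])
  obtain ⟨k, hk, hkx⟩ := hX.exists_conj_eq_of_mk_eq hK (hX.map (MulAut.conj g).toMonoidHom)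
    (mem_zpowers x) (mem_map_of_mem _ (mem_zpowers x)) (y := g * x * g⁻¹) (by simp [hg.eq])
  refine ⟨k⁻¹, inv_mem hk, ?_⟩
  calc k⁻¹ * g * x = k⁻¹ * (g * x * g⁻¹) * g := by group
    _ = x * (k⁻¹ * g) := by rw [← hkx]; group

theorem CentralizerLiftsOfOrder.mul {a b : ℕ} (hab : a.Coprime b)
    (ha : CentralizerLiftsOfOrder.{u} a) (hb : CentralizerLiftsOfOrder.{u} b) :
    CentralizerLiftsOfOrder.{u} (a * b) := by
  intro G _ _ K _ x g hx hcop hg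
  have hab0 : a * b ≠ 0 := hx ▸ (orderOf_pos x).ne'
  have hxa : orderOf (x ^ b) = a := by
    rw [orderOf_pow_of_dvd (right_ne_zero_of_mul hab0) (hx ▸ dvd_mul_left b a), hx,
      Nat.mul_div_cancel a (Nat.pos_of_ne_zero (right_ne_zero_of_mul hab0))]
  have hxb : orderOf (x ^ a) = b := by
    rw [orderOf_pow_of_dvd (left_ne_zero_of_mul hab0) (hx ▸ dvd_mul_right a b), hx,
      Nat.mul_div_cancel_left b (Nat.pos_of_ne_zero (left_ne_zero_of_mul hab0))]
  obtain ⟨k, hk, hkg⟩ :=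
    ha K (x ^ b) g hxa hcop.coprime_mul_right (by simpa using hg.pow_right b)
  set C := centralizer {x ^ b}
  have hxaC : x ^ a ∈ C := mem_centralizer_singleton_iff.mpr (pow_mul_comm x a b)
  have hkgC : k * g ∈ C := mem_centralizer_singleton_iff.mpr hkg
  have hkgx : Commute ((k * g : G) : G ⧸ K) (x ^ a : G) := by
    simpa [(QuotientGroup.eq_one_iff k).mpr hk] using hg.pow_right a
  obtain ⟨k', hk', hkg'⟩ := hb (K.subgroupOf C) ⟨x ^ a, hxaC⟩ ⟨k * g, hkgC⟩
    (by rw [orderOf_mk, hxb])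
    (hcop.coprime_mul_left.coprime_dvd_right
      (card_comap_dvd_of_injective K C.subtype Subtype.coe_injective))
    (QuotientGroup.commute_mk_iff.mpr
      (mem_subgroupOf.mpr (QuotientGroup.commute_mk_iff.mp hkgx)))
  refine ⟨k' * k, mul_mem hk' hk, ?_⟩
  rw [mul_assoc]
  exact .of_pow_of_pow_of_coprime hab (hkg'.map C.subtype)
    (mem_centralizer_singleton_iff.mp (k' * ⟨k * g, hkgC⟩).2)

theorem centralizerLiftsOfOrder (n : ℕ) : CentralizerLiftsOfOrder.{u} n := by
  induction n using Nat.recOnPosPrimePosCoprime with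
  | prime_pow p a hp ha => exact centralizerLiftsOfOrder_prime_pow hp ha
  | zero => exact fun G _ _ K _ x _ hx ↦ absurd hx (orderOf_pos x).ne'
  | one => exact centralizerLiftsOfOrder_one
  | coprime a b _ _ hab iha ihb => exact iha.mul hab ihb

theorem stmt_3 (G : Type*) [Group G] [Fintype G] (K : Subgroup G) [K.Normal] (x : G)
    (h : Nat.Coprime (orderOf x) (Nat.card K)) :
    Subgroup.centralizer {(x : G ⧸ K)} =
      (Subgroup.centralizer {x}).map (QuotientGroup.mk' K) := by
  refine le_antisymm ?_ ((map_centralizer_le_centralizer_image _ _).trans_eq (by simp))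
  intro q hq
  obtain ⟨g, rfl⟩ := QuotientGroup.mk_surjective q
  obtain ⟨k, hk, hkg⟩ :=
    centralizerLiftsOfOrder _ K x g rfl h (mem_centralizer_singleton_iff.mp hq)
  exact ⟨k * g, mem_centralizer_singleton_iff.mpr hkg,
    by simp [(QuotientGroup.eq_one_iff k).mpr hk]⟩
end

section
/- Let G be a finite group and g ∈ G. If every conjugacy class of G contains an element h such that g ∈ C_G(h), then g lies in the center of G. -/
/-!
Every element of `G` is conjugate into the centralizer `C` of `g`, so `G` is the union of the
conjugates of `C`. These are at most `[G : C]` sets of size `|C|`, all containing `1`; hence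
`|G| ≤ 1 + [G : C] (|C| - 1) = 1 + |G| - [G : C]`, which forces `[G : C] = 1`, i.e. `C = G`.
-/

open Finset

namespace Subgroup

variable {G : Type*} [Group G] (H : Subgroup G)

/-- A conjugate `a H a⁻¹` depends only on the coset `a H`, so coset representatives suffice. -/
lemma exists_out_conj_mem_of_isConj {x y : G} (hy : y ∈ H) (hxy : IsConj x y) :
    ∃ (q : G ⧸ H) (z : G), z ∈ H ∧ x = q.out * z * q.out⁻¹ := by
  obtain ⟨c, rfl⟩ := isConj_iff.1 hxy.symm
  obtain ⟨⟨k, hk⟩, hc⟩ := QuotientGroup.mk_out_eq_mul H c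
  refine ⟨c, k⁻¹ * y * k, H.mul_mem (H.mul_mem (H.inv_mem hk) hy) hk, ?_⟩
  rw [hc]
  group

lemma card_le_index_mul_add_one_of_forall_isConj_mem [Finite G]
    (hH : ∀ x : G, ∃ y ∈ H, IsConj x y) :
    Nat.card G ≤ H.index * (Nat.card H - 1) + 1 := by
  classical
  have := Fintype.ofFinite G
  let nontrivial : Finset G := (H : Set G).toFinset.erase 1
  have cover : univ.erase 1 ⊆ univ.biUnion fun q : G ⧸ H =>
      nontrivial.image fun z => q.out * z * q.out⁻¹ := by
    intro x hx
    obtain ⟨y, hy, hxy⟩ := hH x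
    obtain ⟨q, z, hz, rfl⟩ := H.exists_out_conj_mem_of_isConj hy hxy
    have hz1 : z ≠ 1 := by rintro rfl; simp at hx
    simp only [mem_biUnion, mem_univ, true_and, mem_image]
    exact ⟨q, z, by simp [nontrivial, hz, hz1], rfl⟩
  have hcard : #nontrivial = Nat.card H - 1 := by
    rw [card_erase_of_mem (by simp [H.one_mem]), ← Nat.card_eq_card_toFinset]
    rfl
  calc Nat.card G = #(univ.erase (1 : G)) + 1 := by
        rw [card_erase_add_one (mem_univ 1), card_univ, Nat.card_eq_fintype_card]
    _ ≤ #(univ : Finset (G ⧸ H)) * (Nat.card H - 1) + 1 := by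
        gcongr
        refine (card_le_card cover).trans (card_biUnion_le_card_mul _ _ _ fun q _ => ?_)
        exact hcard ▸ card_image_le
    _ = H.index * (Nat.card H - 1) + 1 := by
        rw [card_univ, ← Nat.card_eq_fintype_card, ← index_eq_card]

theorem eq_top_of_forall_isConj_mem [Finite G] (hH : ∀ x : G, ∃ y ∈ H, IsConj x y) :
    H = ⊤ := by
  have hcount := H.card_le_index_mul_add_one_of_forall_isConj_mem hH
  have hindex := H.card_mul_index
  obtain ⟨k, hk⟩ := Nat.exists_eq_add_one.2 (Nat.card_pos (α := H))
  rw [hk, Nat.add_sub_cancel] at hcount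
  rw [hk] at hindex
  rw [← index_eq_one]
  refine le_antisymm ?_ (Nat.one_le_iff_ne_zero.2 H.index_ne_zero_of_finite)
  linarith

end Subgroup

theorem stmt_6 (G : Type*) [Group G] [Fintype G] (g : G)
    (h : ∀ x : G, ∃ h : G, IsConj x h ∧ g * h = h * g) :
    g ∈ Subgroup.center G := by
  have hcentralizer : Subgroup.centralizer {g} = ⊤ :=
    Subgroup.eq_top_of_forall_isConj_mem _ fun x =>
      (h x).imp fun y ⟨hxy, hgy⟩ => ⟨Subgroup.mem_centralizer_singleton_iff.2 hgy.symm, hxy⟩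
  exact Subgroup.centralizer_eq_top_iff_subset.1 hcentralizer rfl
end

section
/- Let p be a prime and G a finite group satisfying condition R(p): there exists an integer α > 0 such that for every a ∈ G, the p-part of the index |G : C_G(a)| is either 1 or p^α. Let N be a normal subgroup of G whose order has the same p-part as |G| (i.e., |N|_p = |G|_p). Then N also satisfies R(p): for every x ∈ N, the p-part of |N : C_N(x)| is either 1 or p^α. -/
/-- The `p`-part of a natural number: the largest power of `p` dividing it. -/
def pPart (p n : ℕ) : ℕ := p ^ (n.factorization p)

/-!
Since `|N|_p = |G|_p`, the index `|G : N|` is prime to `p`. For any subgroup `H`,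
`|N : H ∩ N| · |G : N| = |G : H ∩ N| = |H : H ∩ N| · |G : H|`, and `|H : H ∩ N|` divides
`|G : N|` because `N` is normal, so `|N : H ∩ N|` and `|G : H|` have the same `p`-part.
Applied to `H = C_G(x)`, whose intersection with `N` is `C_N(x)`, this shows that the class
sizes of `x` in `N` and in `G` have the same `p`-part.
-/

lemma pPart_mul (p : ℕ) {a b : ℕ} (ha : a ≠ 0) (hb : b ≠ 0) :
    pPart p (a * b) = pPart p a * pPart p b :=
  Nat.ordProj_mul p ha hb

namespace Subgroup

variable {G : Type*} [Group G]

lemma centralizer_singleton_eq_subgroupOf (N : Subgroup G) (x : N) :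
    centralizer {x} = (centralizer {(x : G)}).subgroupOf N := by
  ext y
  simp only [mem_subgroupOf, mem_centralizer_singleton_iff, Subtype.ext_iff, coe_mul]

variable [Finite G] {p : ℕ}

lemma pPart_index_eq_one_of_pPart_card_eq {N : Subgroup G}
    (hN : pPart p (Nat.card N) = pPart p (Nat.card G)) : pPart p N.index = 1 := by
  have h := pPart_mul p (Nat.card_pos (α := N)).ne' N.index_ne_zero_of_finite
  rw [card_mul_index] at h
  exact (Nat.mul_eq_left (Nat.ordProj_pos _ p).ne').mp (hN ▸ h).symm

lemma pPart_relIndex_eq_of_normal (H : Subgroup G) {K : Subgroup G} [K.Normal]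
    (hK : pPart p K.index = 1) : pPart p (H.relIndex K) = pPart p H.index := by
  have hK_rel : pPart p (K.relIndex H) = 1 :=
    Nat.dvd_one.mp <| hK ▸
      Nat.ordProj_dvd_ordProj_of_dvd K.index_ne_zero_of_finite (K.relIndex_dvd_index_of_normal H) p
  have hcross : H.relIndex K * K.index = K.relIndex H * H.index := by
    have hHK := relIndex_inf_mul_relIndex H K ⊤
    have hKH := relIndex_inf_mul_relIndex K H ⊤
    simp only [inf_top_eq, relIndex_top_right] at hHK hKH
    rw [hHK, hKH, inf_comm]
  have hHK : H.relIndex K ≠ 0 := (H.subgroupOf K).index_ne_zero_of_finite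
  have hKH : K.relIndex H ≠ 0 := (K.subgroupOf H).index_ne_zero_of_finite
  calc pPart p (H.relIndex K)
      = pPart p (H.relIndex K * K.index) := by
        rw [pPart_mul p hHK K.index_ne_zero_of_finite, hK, mul_one]
    _ = pPart p (K.relIndex H * H.index) := by rw [hcross]
    _ = pPart p H.index := by
        rw [pPart_mul p hKH H.index_ne_zero_of_finite, hK_rel, one_mul]

end Subgroup

theorem stmt_7_general (G : Type*) [Group G] [Fintype G] (p : ℕ)
    (α : ℕ)
    (hR : ∀ a : G, pPart p (Subgroup.centralizer {a}).index ∈ ({1, p ^ α} : Set ℕ))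
    (N : Subgroup G) [N.Normal]
    (hN : pPart p (Nat.card N) = pPart p (Nat.card G)) :
    ∀ x : N, pPart p (Subgroup.centralizer {x}).index ∈ ({1, p ^ α} : Set ℕ) := by
  intro x
  rw [N.centralizer_singleton_eq_subgroupOf, ← Subgroup.relIndex,
    Subgroup.pPart_relIndex_eq_of_normal _ (Subgroup.pPart_index_eq_one_of_pPart_card_eq hN)]
  exact hR x

theorem stmt_7 (G : Type*) [Group G] [Fintype G] (p : ℕ) (hp : p.Prime)
    (α : ℕ) (hα : 0 < α)
    (hR : ∀ a : G, pPart p (Subgroup.centralizer {a}).index ∈ ({1, p ^ α} : Set ℕ))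
    (N : Subgroup G) [N.Normal]
    (hN : pPart p (Nat.card N) = pPart p (Nat.card G)) :
    ∀ x : N, pPart p (Subgroup.centralizer {x}).index ∈ ({1, p ^ α} : Set ℕ) :=
  stmt_7_general G p α hR N hN
end

section
/- Let p be a prime and G a finite group. If every p'-element of G (element of order coprime to p) has conjugacy class size coprime to p, then G has a normal p-complement whose product with a Sylow p-subgroup gives a direct product decomposition; that is, a Sylow p-subgroup of G is a direct factor of G. -/
/-!
Write every `g` as `u * y` with `u` a `p`-element and `y` a `p'`-element commuting with it.
The hypothesis puts a Sylow subgroup `Q ∋ u` inside `C_G(y)`, so `g` normalizes `Q`. Thus every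
element of `G` fixes a point of the transitive action of `G` on its Sylow `p`-subgroups; by
Burnside's lemma (Jordan's argument) such an action has only one point, so `P` is normal.
Every `p'`-element then centralizes `P`, so a Schur–Zassenhaus complement of `P` is normal.
-/

open Subgroup MulAction

theorem MulAction.subsingleton_of_forall_exists_smul_eq_self {G X : Type*} [Group G] [Finite G]
    [MulAction G X] [Finite X] [IsPretransitive G X] (h : ∀ g : G, ∃ x : X, g • x = x) :
    Subsingleton X := by
  classical
  have := Fintype.ofFinite G
  have := Fintype.ofFinite X
  by_contra hX
  rw [not_subsingleton_iff_nontrivial] at hX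
  obtain ⟨_⟩ := (pretransitive_iff_unique_quotient_of_nonempty G X).mp ‹_›
  have hsum := sum_card_fixedBy_eq_card_orbits_mul_card_group G X
  rw [Fintype.card_unique, one_mul] at hsum
  have hpos : ∀ g : G, 1 ≤ Fintype.card (fixedBy X g) := fun g =>
    Fintype.card_pos_iff.mpr (let ⟨x, hx⟩ := h g; ⟨⟨x, hx⟩⟩)
  have hone : 1 < Fintype.card (fixedBy X (1 : G)) := by
    simp only [fixedBy_one_eq_univ]
    simpa using Fintype.one_lt_card
  have := Finset.sum_lt_sum (s := Finset.univ) (fun g _ => hpos g) ⟨1, Finset.mem_univ _, hone⟩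
  rw [hsum, Finset.sum_const, Finset.card_univ, smul_eq_mul, mul_one] at this
  exact this.false

section

variable {G : Type*} [Group G] [Finite G] {p : ℕ} [hp : Fact p.Prime]

theorem exists_commute_mul_eq_isPGroup_zpowers (g : G) :
    ∃ u y : G, Commute u y ∧ u * y = g ∧ IsPGroup p (zpowers u) ∧ ¬ p ∣ orderOf y := by
  -- with `orderOf g = a * m`, `a` the `p`-part, Bezout `m * B + a * A = 1` gives `u = g ^ (m * B)`
  -- and `y = g ^ (a * A)`
  set n := orderOf g
  have hn : n ≠ 0 := (orderOf_pos g).ne'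
  set a := p ^ n.factorization p
  set m := ordCompl[p] n
  have ham : (a : ℤ) * m = n := mod_cast Nat.ordProj_mul_ordCompl_eq_self n p
  have hbez : (1 : ℤ) = m * Nat.gcdB a m + a * Nat.gcdA a m := by
    have := Nat.gcd_eq_gcd_ab a m
    rw [((Nat.coprime_ordCompl hp.out hn).pow_left _).gcd_eq_one] at this
    push_cast at this; linarith
  have hpow {c d : ℕ} (k : ℤ) (hcd : (c : ℤ) * d = n) : (g ^ (c * k)) ^ (d : ℤ) = 1 := by
    rw [← zpow_mul, ← orderOf_dvd_iff_zpow_eq_one]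
    exact ⟨k, by rw [← hcd]; ring⟩
  refine ⟨g ^ ((m : ℤ) * Nat.gcdB a m), g ^ ((a : ℤ) * Nat.gcdA a m),
    Commute.zpow_zpow_self g _ _, by rw [← zpow_add, ← hbez, zpow_one], ?_, ?_⟩
  · refine IsPGroup.of_card_dvd_pow (n := n.factorization p) ?_
    rw [Nat.card_zpowers]
    exact orderOf_dvd_of_pow_eq_one (by exact_mod_cast hpow _ (by rw [mul_comm, ham]))
  · intro hdvd
    exact Nat.not_dvd_ordCompl hp.out hn (hdvd.trans
      (orderOf_dvd_of_pow_eq_one (by exact_mod_cast hpow _ ham)))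

theorem IsPGroup.exists_sylow_le_of_not_dvd_index {K C : Subgroup G}
    (hK : IsPGroup p K) (hKC : K ≤ C) (hC : ¬ p ∣ C.index) :
    ∃ Q : Sylow p G, K ≤ Q ∧ (Q : Subgroup G) ≤ C := by
  obtain ⟨R, hR⟩ := (hK.comap_subtype (K := C)).exists_le_sylow
  have hRC : ¬ p ∣ ((R : Subgroup C).map C.subtype).index := by
    rw [index_map_subtype]
    exact hp.out.prime.not_dvd_mul R.not_dvd_index hC
  refine ⟨(R.2.map C.subtype).toSylow hRC, fun x hx => ?_, map_subtype_le _⟩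
  exact ⟨⟨x, hKC hx⟩, hR hx, rfl⟩

theorem Sylow.exists_normal_isCompl_of_forall_mem_centralizer (P : Sylow p G)
    [(P : Subgroup G).Normal]
    (hP : ∀ x : G, ¬ p ∣ orderOf x → x ∈ centralizer (P : Set G)) :
    ∃ H : Subgroup G, H.Normal ∧ IsCompl (P : Subgroup G) H := by
  obtain ⟨H, hH⟩ := exists_right_complement'_of_coprime P.card_coprime_index
  have hHP : H ≤ centralizer (P : Subgroup G) := fun x hx => hP x fun hdvd =>
    P.not_dvd_index (hH.symm.index_eq_card ▸ hdvd.trans (H.orderOf_dvd_natCard hx))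
  refine ⟨H, normalizer_eq_top_iff.mp (top_le_iff.mp ?_), hH.isCompl⟩
  rw [← hH.isCompl.sup_eq_top]
  exact sup_le ((le_centralizer_iff.mp hHP).trans (centralizer_le_normalizer _)) le_normalizer

section

variable (h : ∀ x : G, ¬ p ∣ orderOf x → Nat.Coprime (centralizer {x}).index p)
include h

theorem exists_sylow_le_centralizer {x : G} (hx : ¬ p ∣ orderOf x) {K : Subgroup G}
    (hK : IsPGroup p K) (hKx : K ≤ centralizer {x}) :
    ∃ Q : Sylow p G, K ≤ Q ∧ x ∈ centralizer (Q : Set G) := by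
  obtain ⟨Q, hKQ, hQx⟩ :=
    hK.exists_sylow_le_of_not_dvd_index hKx ((hp.out.coprime_iff_not_dvd).mp (h x hx).symm)
  exact ⟨Q, hKQ, mem_centralizer_iff.mpr fun q hq => mem_centralizer_singleton_iff.mp (hQx hq)⟩

theorem exists_sylow_smul_eq (g : G) : ∃ Q : Sylow p G, g • Q = Q := by
  obtain ⟨u, y, hcomm, rfl, hu, hy⟩ := exists_commute_mul_eq_isPGroup_zpowers (p := p) g
  obtain ⟨Q, huQ, hQy⟩ := exists_sylow_le_centralizer h hy hu
    (zpowers_le.mpr (mem_centralizer_singleton_iff.mpr hcomm.eq))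
  exact ⟨Q, Sylow.smul_eq_iff_mem_normalizer.mpr
    (mul_mem (le_normalizer (huQ (mem_zpowers u))) (centralizer_le_normalizer _ hQy))⟩

theorem subsingleton_sylow : Subsingleton (Sylow p G) :=
  subsingleton_of_forall_exists_smul_eq_self (exists_sylow_smul_eq h)

end

end

theorem stmt_8 (G : Type*) [Group G] [Fintype G] (p : ℕ) [Fact p.Prime]
    (h : ∀ x : G, ¬ p ∣ orderOf x → Nat.Coprime (Subgroup.centralizer {x}).index p) :
    ∀ P : Sylow p G, (P : Subgroup G).Normal ∧
      ∃ H : Subgroup G, H.Normal ∧ IsCompl (P : Subgroup G) H := by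
  have := subsingleton_sylow h
  intro P
  have hP := P.normal_of_subsingleton
  refine ⟨hP, P.exists_normal_isCompl_of_forall_mem_centralizer fun x hx => ?_⟩
  obtain ⟨Q, -, hQx⟩ := exists_sylow_le_centralizer h hx IsPGroup.of_bot bot_le
  rwa [Subsingleton.elim P Q]
end

section
/- Let p be a prime and let A × B act faithfully via automorphisms on a finite p-group P, where A is a p'-group and B is a p-group. If A acts trivially on the fixed-point subgroup C_P(B), then A = 1. -/
/-!
Since `B` is a `p`-group acting on the `p`-group `P`, the semidirect product `P ⋊ B` is a
`p`-group, hence nilpotent, so its lower central series `γ₀ = ⊤ ≥ γ₁ ≥ ⋯` reaches `1`. By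
descending induction, `A` centralises `P ∩ γᵢ` for every `i`: if `A` centralises `P ∩ γᵢ₊₁`,
take `v ∈ P ∩ γᵢ` and `a ∈ A`. Every `v⁻¹ (b • v)` lies in `γᵢ₊₁` and is therefore fixed by `a`;
since `a` and `b` commute, this makes `w = (a • v) v⁻¹` fixed by `B`. Hence `w ∈ C_P(B)`, so `a`
fixes `w`. Then `aⁿ • v = wⁿ v`, so `w ^ |A| = 1`, and `w = 1` because `|A|` is prime to `p`.
-/

open SemidirectProduct
open scoped commutatorElement

section Action

variable {M P : Type*} [Monoid M] [Group P] [MulDistribMulAction M P]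

theorem pow_smul_eq_pow_mul {m : M} {v w : P} (hw : m • w = w) (hv : m • v = w * v) (n : ℕ) :
    m ^ n • v = w ^ n * v := by
  induction n with
  | zero => simp
  | succ n ih => rw [pow_succ', mul_smul, ih, smul_mul', smul_pow', hw, hv, pow_succ, mul_assoc]

theorem IsPGroup.smul_eq_self_of_smul_mul_inv_fixed {p : ℕ} (hP : IsPGroup p P) {m : M} {n : ℕ}
    (hm : m ^ n = 1) (hn : n.Coprime p) {v : P} (hw : m • (m • v * v⁻¹) = m • v * v⁻¹) :
    m • v = v := by
  set w := m • v * v⁻¹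
  have hv : m • v = w * v := by simp [w]
  have hwn : w ^ n = 1 := by
    simpa [hm] using (pow_smul_eq_pow_mul hw hv n).symm
  have hw1 : w = 1 := (hP.powEquiv hn.symm).injective (by simp [IsPGroup.powEquiv_apply, hwn])
  rw [hv, hw1, one_mul]

theorem smul_mul_inv_fixed_of_commute {m n : M} (hmn : Commute m n) {v : P}
    (hc : m • (v⁻¹ * n • v) = v⁻¹ * n • v) : n • (m • v * v⁻¹) = m • v * v⁻¹ := by
  have hnv : n • m • v = m • v * (v⁻¹ * n • v) := by
    rw [smul_smul, ← hmn.eq, mul_smul, ← hc, ← smul_mul', mul_inv_cancel_left]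
  rw [smul_mul', smul_inv', hnv]
  group

end Action

theorem SemidirectProduct.commutatorElement_inl_inr {N G : Type*} [Group N] [Group G]
    {φ : G →* MulAut N} (n : N) (g : G) :
    ⁅(inl n : N ⋊[φ] G), (inr g : N ⋊[φ] G)⁆ = inl (n * (φ g n)⁻¹) := by
  rw [map_mul, map_inv, inl_aut, commutatorElement_def, map_inv inr]
  group

theorem IsPGroup.semidirectProduct {p : ℕ} {N G : Type*} [Group N] [Group G] [Finite N] [Finite G]
    (hN : IsPGroup p N) (hG : IsPGroup p G) (φ : G →* MulAut N) : IsPGroup p (N ⋊[φ] G) := by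
  obtain ⟨k, hk⟩ := isPGroup_iff_card_dvd_pow.mp hN
  obtain ⟨l, hl⟩ := isPGroup_iff_card_dvd_pow.mp hG
  refine .of_card_dvd_pow (n := k + l) ?_
  rw [SemidirectProduct.card, pow_add]
  exact mul_dvd_mul hk hl

section ProductAction

variable {p : ℕ} {A B P : Type*} [Group A] [Group B] [Group P] [MulDistribMulAction (A × B) P]

variable (A B P) in
def sndMulAut : B →* MulAut P :=
  (MulDistribMulAction.toMulAut (A × B) P).comp (MonoidHom.inr A B)

local notation "𝒢" => P ⋊[sndMulAut A B P] B

theorem inl_inv_mul_smul_mem_commutator {H : Subgroup 𝒢} {v : P}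
    (hv : inl v ∈ H) (b : B) : inl (v⁻¹ * ((1 : A), b) • v) ∈ ⁅H, (⊤ : Subgroup 𝒢)⁆ := by
  have h := Subgroup.commutator_mem_commutator (inv_mem hv) (Subgroup.mem_top (inr b))
  rwa [← map_inv, commutatorElement_inl_inr, map_inv, inv_inv] at h

variable (hP : IsPGroup p P) (hA : (Nat.card A).Coprime p)
  (htriv : ∀ x : P, (∀ b : B, ((1 : A), b) • x = x) → ∀ a : A, (a, (1 : B)) • x = x)
include hP hA htriv

theorem smul_eq_self_of_inl_mem_of_commutator {H : Subgroup 𝒢}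
    (hH : ∀ v : P, inl v ∈ ⁅H, (⊤ : Subgroup 𝒢)⁆ → ∀ a : A, (a, (1 : B)) • v = v)
    {v : P} (hv : inl v ∈ H) (a : A) : (a, (1 : B)) • v = v := by
  have hwB : ∀ b : B, ((1 : A), b) • ((a, (1 : B)) • v * v⁻¹) = (a, (1 : B)) • v * v⁻¹ :=
    fun b => smul_mul_inv_fixed_of_commute ((Commute.one_right a).prod (Commute.one_left b))
      (hH _ (inl_inv_mul_smul_mem_commutator hv b) a)
  have hpow : ((a, (1 : B)) : A × B) ^ Nat.card A = 1 := by
    rw [Prod.pow_mk, pow_card_eq_one', one_pow, Prod.mk_one_one]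
  exact hP.smul_eq_self_of_smul_mul_inv_fixed hpow hA (htriv _ hwB a)

theorem smul_eq_self_of_lowerCentralSeries_eq_bot (k : ℕ) :
    ∀ m : ℕ, (⊤ : Subgroup 𝒢).lowerCentralSeries (m + k) = ⊥ →
      ∀ v : P, inl v ∈ (⊤ : Subgroup 𝒢).lowerCentralSeries m →
        ∀ a : A, (a, (1 : B)) • v = v := by
  induction k with
  | zero =>
    intro m hm v hv a
    rw [Nat.add_zero] at hm
    rw [hm, Subgroup.mem_bot, ← map_one inl, inl_inj] at hv
    rw [hv, smul_one]
  | succ k ih =>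
    intro m hm v hv
    exact smul_eq_self_of_inl_mem_of_commutator hP hA htriv
      (ih (m + 1) (by rwa [Nat.add_right_comm, Nat.add_assoc])) hv

theorem smul_eq_self_of_smul_eq_self_on_fixedPoints [Fact p.Prime] [Finite P] [Finite B]
    (hB : IsPGroup p B) (a : A) (x : P) : (a, (1 : B)) • x = x := by
  have : Finite 𝒢 := .of_equiv _ equivProd.symm
  have : Group.IsNilpotent 𝒢 := (hP.semidirectProduct hB _).isNilpotent
  obtain ⟨n, hn⟩ := Subgroup.nilpotent_iff_lowerCentralSeries.mp this
  exact smul_eq_self_of_lowerCentralSeries_eq_bot hP hA htriv n 0 (by rwa [Nat.zero_add]) x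
    (Subgroup.mem_top _) a

end ProductAction

theorem stmt_9_general (p : ℕ) (hp : p.Prime) (P A B : Type*) [Group P] [Fintype P]
    [Group A] [Group B] [Fintype B]
    [MulDistribMulAction (A × B) P] [FaithfulSMul (A × B) P]
    (hP : IsPGroup p P) (hA : Nat.Coprime (Nat.card A) p) (hB : IsPGroup p B)
    (htriv : ∀ x : P, (∀ b : B, ((1 : A), b) • x = x) → ∀ a : A, (a, (1 : B)) • x = x) :
    ∀ a : A, a = 1 := by
  have : Fact p.Prime := ⟨hp⟩
  intro a
  have h : ((a, (1 : B)) : A × B) = 1 := eq_of_smul_eq_smul fun x => by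
    rw [smul_eq_self_of_smul_eq_self_on_fixedPoints hP hA htriv hB a x, one_smul]
  exact congrArg Prod.fst h

theorem stmt_9 (p : ℕ) (hp : p.Prime) (P A B : Type*) [Group P] [Fintype P]
    [Group A] [Fintype A] [Group B] [Fintype B]
    [MulDistribMulAction (A × B) P] [FaithfulSMul (A × B) P]
    (hP : IsPGroup p P) (hA : Nat.Coprime (Nat.card A) p) (hB : IsPGroup p B)
    (htriv : ∀ x : P, (∀ b : B, ((1 : A), b) • x = x) → ∀ a : A, (a, (1 : B)) • x = x) :
    ∀ a : A, a = 1 :=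
  stmt_9_general p hp P A B hP hA hB htriv
end

section
/- Let A be a finite group of automorphisms of a finite abelian group P with gcd(|A|, |P|) = 1. Then P decomposes as the internal direct product P = C_P(A) × [P, A], where C_P(A) is the subgroup of fixed points and [P, A] is the subgroup generated by elements x⁻¹·(a·x) for x ∈ P, a ∈ A. -/
/-!
The norm map `N x = ∏_{g ∈ G} g • x` takes values in the fixed points, kills every generator
`x⁻¹ * g • x` of `[P, G]`, restricts to `x ↦ x ^ |G|` on the fixed points, and differs from
`x ↦ x ^ |G|` by an element of `[P, G]` everywhere. Since `x ↦ x ^ |G|` is a bijection of `P`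
when `|G|` is prime to `|P|`, a common element `x` of both subgroups satisfies `x ^ |G| = N x = 1`,
hence `x = 1`; and every element is some `y ^ |G| = N y * (N y / y ^ |G|)⁻¹`, a fixed point
times an element of `[P, G]`.
-/

namespace MulDistribMulAction

variable (G P : Type*) [Group G] [CommGroup P] [MulDistribMulAction G P]

/-- The subgroup `[P, G]`. -/
def actionCommutator : Subgroup P :=
  Subgroup.closure {y : P | ∃ x : P, ∃ g : G, y = x⁻¹ * g • x}

variable [Fintype G]

def actionNorm : P →* P where
  toFun x := ∏ g : G, g • x
  map_one' := by simp
  map_mul' x y := by simp only [smul_mul', Finset.prod_mul_distrib]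

variable {G P}

theorem actionNorm_apply (x : P) : actionNorm G P x = ∏ g : G, g • x := rfl

theorem actionNorm_mem_fixedPoints (x : P) : actionNorm G P x ∈ FixedPoints.subgroup G P := by
  intro h
  simp only [actionNorm_apply, Finset.smul_prod', smul_smul]
  exact Fintype.prod_equiv (Equiv.mulLeft h) _ _ fun _ => rfl

theorem actionNorm_smul (h : G) (x : P) : actionNorm G P (h • x) = actionNorm G P x := by
  simp only [actionNorm_apply, smul_smul]
  exact Fintype.prod_equiv (Equiv.mulRight h) _ _ fun _ => rfl

theorem actionCommutator_le_ker_actionNorm : actionCommutator G P ≤ (actionNorm G P).ker := by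
  rw [actionCommutator, Subgroup.closure_le]
  rintro _ ⟨x, g, rfl⟩
  simp [actionNorm_smul]

theorem actionNorm_eq_pow_of_mem_fixedPoints {x : P} (hx : x ∈ FixedPoints.subgroup G P) :
    actionNorm G P x = x ^ Nat.card G := by
  simp [actionNorm_apply, (FixedPoints.mem_subgroup G P x).mp hx]

theorem actionNorm_div_pow_mem_actionCommutator (x : P) :
    actionNorm G P x / x ^ Nat.card G ∈ actionCommutator G P := by
  have hprod : actionNorm G P x / x ^ Nat.card G = ∏ g : G, x⁻¹ * g • x := by
    simp [actionNorm_apply, Finset.prod_mul_distrib, div_eq_inv_mul]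
  rw [hprod]
  exact Subgroup.prod_mem _ fun g _ => Subgroup.subset_closure ⟨x, g, rfl⟩

theorem isCompl_fixedPoints_actionCommutator [Finite P]
    (hco : (Nat.card G).Coprime (Nat.card P)) :
    IsCompl (FixedPoints.subgroup G P) (actionCommutator G P) := by
  have hpow := Nat.Coprime.pow_left_bijective (G := P) hco.symm
  constructor
  · rw [Subgroup.disjoint_def]
    intro x hfix hcomm
    have hxn : x ^ Nat.card G = 1 := by
      rw [← actionNorm_eq_pow_of_mem_fixedPoints hfix]
      exact actionCommutator_le_ker_actionNorm hcomm
    exact hpow.injective (hxn.trans (one_pow _).symm)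
  · rw [codisjoint_iff, eq_top_iff]
    intro x _
    obtain ⟨y, rfl⟩ := hpow.surjective x
    change y ^ Nat.card G ∈ _
    rw [← div_div_cancel (actionNorm G P y) (y ^ Nat.card G), div_eq_mul_inv]
    exact Subgroup.mul_mem_sup (actionNorm_mem_fixedPoints y)
      (inv_mem (actionNorm_div_pow_mem_actionCommutator y))

end MulDistribMulAction

open MulDistribMulAction in
theorem stmt_10 (P : Type*) [CommGroup P] [Fintype P] (A : Subgroup (MulAut P))
    (hco : Nat.Coprime (Nat.card A) (Nat.card P)) :
    IsCompl (FixedPoints.subgroup A P)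
      (Subgroup.closure {y : P | ∃ x : P, ∃ a ∈ A, y = x⁻¹ * a x}) := by
  have := Fintype.ofFinite A
  have hgen : {y : P | ∃ x : P, ∃ a ∈ A, y = x⁻¹ * a x} =
      {y | ∃ x : P, ∃ a : A, y = x⁻¹ * a • x} :=
    Set.ext fun _ => ⟨fun ⟨x, a, ha, hy⟩ => ⟨x, ⟨a, ha⟩, hy⟩, fun ⟨x, a, hy⟩ => ⟨x, a, a.2, hy⟩⟩
  rw [hgen]
  exact isCompl_fixedPoints_actionCommutator hco
end

section
/- Let A be a finite group acting by automorphisms on a finite group G, and let N be a normal A-invariant subgroup of G with gcd(|A|, |N|) = 1. Assume A is solvable or N is solvable. Then the fixed points of A on G/N are the image of the fixed points of A on G: C_{G/N}(A) = C_G(A)N/N. -/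
/-!
An `A`-fixed coset `xN` is an `A`-invariant set on which `N` acts regularly by right
multiplication. If `A` is a `p`-group, then `|xN| = |N|` is prime to `p` and orbit counting gives
a fixed point. If `N` is abelian, `a ↦ x⁻¹ (a • x)` is a `1`-cocycle of `A` with values in `N`;
since `|A|` is prime to `|N|` it is a coboundary (average over `A`, then take an `|A|`-th root),
and the coboundary moves `x` to a fixed point of `xN`.

The general case is by induction. A solvable `A` is either simple, hence of prime order, or has
a proper nontrivial normal subgroup `B`: first find a `B`-fixed `y₀ ∈ xN`, then `A ⧸ B` acts on
the `B`-fixed points `C_G(B)`, and `y₀ (N ∩ C_G(B))` is an `A ⧸ B`-fixed coset there. For `N`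
solvable, lift first in `G ⧸ [N, N]`, where the image of `N` is abelian, and then along `[N, N]`.
-/

theorem groupCohomology.isMulCoboundary₁_of_coprime {A M : Type*} [Group A] [Finite A]
    [CommGroup M] [MulDistribMulAction A M] (hco : (Nat.card A).Coprime (Nat.card M))
    {f : A → M} (hf : IsMulCocycle₁ f) : IsMulCoboundary₁ f := by
  have := Fintype.ofFinite A
  set c := ∏ b, f b
  have hc : ∀ a : A, a • c = c / f a ^ Nat.card A := by
    intro a
    calc a • c = ∏ b, f (a * b) / f a := by
          simp only [c, Finset.smul_prod']
          exact Finset.prod_congr rfl fun b _ => by rw [hf, mul_div_cancel_right]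
      _ = c / f a ^ Nat.card A := by
          rw [Finset.prod_div_distrib, Finset.prod_const, Finset.card_univ,
            ← Nat.card_eq_fintype_card,
            Fintype.prod_equiv (Equiv.mulLeft a) (fun b => f (a * b)) f fun _ => rfl]
  let e := powCoprime hco.symm
  refine ⟨e.symm c⁻¹, fun a => e.injective ?_⟩
  change (a • e.symm c⁻¹ / e.symm c⁻¹) ^ Nat.card A = f a ^ Nat.card A
  have he : e.symm c⁻¹ ^ Nat.card A = c⁻¹ := e.apply_symm_apply c⁻¹
  rw [div_pow, ← smul_pow', he, smul_inv', hc, inv_div, div_inv_eq_mul, div_mul_cancel]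

theorem Subgroup.commutator_lt_of_isSolvable {G : Type*} [Group G] {N : Subgroup G}
    [Group.IsSolvable N] (hN : N ≠ ⊥) : ⁅N, N⁆ < N := by
  have : Nontrivial N := N.nontrivial_iff_ne_bot.mpr hN
  have := Group.IsSolvable.commutator_lt_top_of_nontrivial N
  rwa [← Subgroup.map_subtype_lt_map_subtype, _root_.commutator, Subgroup.map_commutator,
    ← MonoidHom.range_eq_map, Subgroup.range_subtype] at this

section Invariant

variable {A G : Type*} [Monoid A] [Group G] [MulDistribMulAction A G]

theorem QuotientGroup.mk_smul_eq_mk_smul {N : Subgroup G} (hN : ∀ a : A, ∀ n ∈ N, a • n ∈ N)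
    {x y : G} (h : (x : G ⧸ N) = y) (a : A) : ((a • x : G) : G ⧸ N) = (a • y : G) := by
  rw [QuotientGroup.eq] at h ⊢
  simpa only [smul_inv', smul_mul'] using hN a _ h

theorem smul_mem_commutator_of_smul_mem {N : Subgroup G} (hinv : ∀ a : A, ∀ n ∈ N, a • n ∈ N)
    (a : A) : ∀ m ∈ ⁅N, N⁆, a • m ∈ ⁅N, N⁆ := by
  have hNa : N.map (MulDistribMulAction.toMonoidHom G a) ≤ N :=
    Subgroup.map_le_iff_le_comap.mpr (hinv a)
  intro m hm
  have := Subgroup.mem_map_of_mem (MulDistribMulAction.toMonoidHom G a) hm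
  rw [Subgroup.map_commutator] at this
  exact Subgroup.commutator_mono hNa hNa this

abbrev Subgroup.mulDistribMulActionOfSmulMem (N : Subgroup G)
    (hN : ∀ a : A, ∀ n ∈ N, a • n ∈ N) : MulDistribMulAction A N where
  smul a n := ⟨a • (n : G), hN a n n.2⟩
  one_smul n := Subtype.ext (one_smul A (n : G))
  mul_smul a b n := Subtype.ext (mul_smul a b (n : G))
  smul_mul a m n := Subtype.ext (smul_mul' a (m : G) n)
  smul_one a := Subtype.ext (smul_one a)

abbrev QuotientGroup.mulDistribMulActionOfSmulMem (N : Subgroup G) [N.Normal]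
    (hN : ∀ a : A, ∀ n ∈ N, a • n ∈ N) : MulDistribMulAction A (G ⧸ N) where
  smul a := Quotient.map' (a • ·) fun _ _ h =>
    Quotient.eq''.mp (QuotientGroup.mk_smul_eq_mk_smul hN (Quotient.eq''.mpr h) a)
  one_smul q := q.induction_on fun g => congrArg QuotientGroup.mk (one_smul A g)
  mul_smul a b q := q.induction_on fun g => congrArg QuotientGroup.mk (mul_smul a b g)
  smul_mul a q r := q.induction_on fun g => r.induction_on fun h =>
    congrArg QuotientGroup.mk (smul_mul' a g h)
  smul_one a := congrArg QuotientGroup.mk (smul_one a)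

end Invariant

def FixedCosetsLift (A : Type*) {G : Type*} [Group G] [SMul A G] (N : Subgroup G) : Prop :=
  ∀ x : G, (∀ a : A, ((a • x : G) : G ⧸ N) = x) →
    ∃ y : G, (∀ a : A, a • y = y) ∧ (y : G ⧸ N) = x

section

variable {A G : Type*} [Group A] [Group G] [MulDistribMulAction A G]

theorem fixedCosetsLift_of_isPGroup {p : ℕ} [Fact p.Prime] (hA : IsPGroup p A)
    {N : Subgroup G} (hinv : ∀ a : A, ∀ n ∈ N, a • n ∈ N) (hN : ¬ p ∣ Nat.card N) :
    FixedCosetsLift A N := by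
  intro x hx
  let coset : SubMulAction A G :=
    { carrier := {y | (y : G ⧸ N) = x}
      smul_mem' a y (hy : (y : G ⧸ N) = x) :=
        (QuotientGroup.mk_smul_eq_mk_smul hinv hy a).trans (hx a) }
  have hcard : Nat.card coset = Nat.card N := by
    refine Nat.card_congr ((Equiv.setCongr ?_).trans (N.leftCosetEquivSubgroup x))
    ext y
    rw [mem_leftCoset_iff]
    exact eq_comm.trans QuotientGroup.eq
  obtain ⟨⟨y, hy⟩, hfix⟩ := hA.nonempty_fixed_point_of_prime_not_dvd_card coset (hcard ▸ hN)
  exact ⟨y, fun a => congrArg Subtype.val (hfix a), hy⟩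

open groupCohomology IsMulCommutative in
theorem fixedCosetsLift_of_isMulCommutative [Finite A] {N : Subgroup G} [IsMulCommutative N]
    (hinv : ∀ a : A, ∀ n ∈ N, a • n ∈ N) (hco : (Nat.card A).Coprime (Nat.card N)) :
    FixedCosetsLift A N := by
  let := N.mulDistribMulActionOfSmulMem hinv
  intro x hx
  have hmem (a : A) : x⁻¹ * (a • x) ∈ N := by
    simpa using N.inv_mem (QuotientGroup.eq.mp (hx a))
  let f (a : A) : N := ⟨x⁻¹ * (a • x), hmem a⟩
  have hf : IsMulCocycle₁ f := fun a b => by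
    rw [mul_comm]
    ext
    change x⁻¹ * ((a * b) • x) = x⁻¹ * (a • x) * a • (x⁻¹ * (b • x))
    rw [smul_mul', smul_inv', mul_smul]
    group
  obtain ⟨n, hn⟩ := isMulCoboundary₁_of_coprime hco hf
  refine ⟨x * (n : G)⁻¹, fun a => ?_, by simp⟩
  have hna : a • (n : G) = n * (x⁻¹ * (a • x)) :=
    congrArg Subtype.val (div_eq_iff_eq_mul'.mp (hn a))
  rw [smul_mul', smul_inv', hna]
  group

theorem FixedCosetsLift.of_normal {B : Subgroup A} [B.Normal] {N : Subgroup G}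
    (hinv : ∀ a : A, ∀ n ∈ N, a • n ∈ N) (hB : FixedCosetsLift B N)
    (hQ : FixedCosetsLift (A ⧸ B) (N.subgroupOf (FixedPoints.subgroup B G))) :
    FixedCosetsLift A N := by
  intro x hx
  obtain ⟨y₀, hy₀, hy₀x⟩ := hB x fun b => hx b
  have mk_eq_iff {g h : FixedPoints.subgroup B G} :
      (g : _ ⧸ N.subgroupOf (FixedPoints.subgroup B G)) = h ↔ ((g : G) : G ⧸ N) = h := by
    simp only [QuotientGroup.eq, Subgroup.mem_subgroupOf, Subgroup.coe_mul, Subgroup.coe_inv]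
  obtain ⟨y, hy, hyy₀⟩ := hQ ⟨y₀, hy₀⟩ fun q => q.induction_on fun a =>
    mk_eq_iff.mpr (((QuotientGroup.mk_smul_eq_mk_smul hinv hy₀x a).trans (hx a)).trans hy₀x.symm)
  exact ⟨y, fun a => congrArg Subtype.val (hy a), (mk_eq_iff.mp hyy₀).trans hy₀x⟩

theorem QuotientGroup.mk_mk_eq_mk_mk_iff {M N : Subgroup G} [M.Normal] (hMN : M ≤ N) {g h : G} :
    ((g : G ⧸ M) : (G ⧸ M) ⧸ N.map (QuotientGroup.mk' M)) = (h : G ⧸ M) ↔ (g : G ⧸ N) = h := by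
  rw [QuotientGroup.eq, QuotientGroup.eq, ← QuotientGroup.mk_inv, ← QuotientGroup.mk_mul,
    ← QuotientGroup.mk'_apply, ← Subgroup.mem_comap,
    Subgroup.comap_map_eq_self (by rwa [QuotientGroup.ker_mk'])]

theorem FixedCosetsLift.of_le {M N : Subgroup G} [M.Normal] (hMN : M ≤ N)
    (hinvM : ∀ a : A, ∀ m ∈ M, a • m ∈ M)
    (hM : FixedCosetsLift A M)
    (hQ : letI := QuotientGroup.mulDistribMulActionOfSmulMem M hinvM
      FixedCosetsLift A (N.map (QuotientGroup.mk' M))) :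
    FixedCosetsLift A N := by
  let := QuotientGroup.mulDistribMulActionOfSmulMem M hinvM
  intro x hx
  obtain ⟨q, hq, hqx⟩ := hQ x fun a => (QuotientGroup.mk_mk_eq_mk_mk_iff hMN).mpr (hx a)
  obtain ⟨g, rfl⟩ := QuotientGroup.mk_surjective q
  obtain ⟨y, hy, hyg⟩ := hM g hq
  exact ⟨y, hy, (QuotientGroup.eq.mpr (hMN (QuotientGroup.eq.mp hyg))).trans
    ((QuotientGroup.mk_mk_eq_mk_mk_iff hMN).mp hqx)⟩

end

theorem fixedCosetsLift_of_coprime_of_isSolvable_left {A G : Type*} [Group A]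
    [Finite A] [Group.IsSolvable A] [Group G] [MulDistribMulAction A G] {N : Subgroup G}
    (hinv : ∀ a : A, ∀ n ∈ N, a • n ∈ N) (hco : (Nat.card A).Coprime (Nat.card N)) :
    FixedCosetsLift A N := by
  induction hn : Nat.card A using Nat.strong_induction_on generalizing A G with
  | _ n ih =>
  subst hn
  rcases subsingleton_or_nontrivial A with hA | hA
  · exact fun x _ => ⟨x, fun a => by rw [Subsingleton.elim a 1, one_smul], rfl⟩
  by_cases hsimple : IsSimpleGroup A
  · let : CommGroup A := { mul_comm := IsSimpleGroup.comm_iff_isSolvable.mpr ‹_› }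
    have hp := IsSimpleGroup.prime_card (α := A)
    have : Fact _ := ⟨hp⟩
    refine fixedCosetsLift_of_isPGroup (IsPGroup.of_card (n := 1) (pow_one _).symm) hinv
      fun hdvd => hp.one_lt.ne' (Nat.eq_one_of_dvd_one (hco ▸ Nat.dvd_gcd dvd_rfl hdvd))
  obtain ⟨B, hBn, hBbot, hBtop⟩ : ∃ B : Subgroup A, B.Normal ∧ B ≠ ⊥ ∧ B ≠ ⊤ := by
    by_contra! h
    exact hsimple { eq_bot_or_eq_top_of_normal B hB := or_iff_not_imp_left.mpr (h B hB) }
  have hcardB : Nat.card B < Nat.card A :=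
    lt_of_le_of_ne (Subgroup.card_le_card_group B) (mt B.eq_top_of_card_eq hBtop)
  have hcardQ : Nat.card (A ⧸ B) < Nat.card A := by
    conv_rhs => rw [B.card_eq_card_quotient_mul_card_subgroup]
    exact lt_mul_of_one_lt_right Nat.card_pos (B.one_lt_card_iff_ne_bot.mpr hBbot)
  refine FixedCosetsLift.of_normal hinv (ih _ hcardB (fun b => hinv b) ?_ rfl)
    (ih _ hcardQ (fun q => q.induction_on fun a n hn => hinv a n hn) ?_ rfl)
  · exact hco.coprime_dvd_left B.card_subgroup_dvd_card
  · exact (hco.coprime_dvd_left B.card_quotient_dvd_card).coprime_dvd_right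
      (N.card_comap_dvd_of_injective _ Subtype.coe_injective)

theorem fixedCosetsLift_of_coprime_of_isSolvable_right {A G : Type*} [Group A]
    [Finite A] [Group G] [Finite G] [MulDistribMulAction A G] {N : Subgroup G} [N.Normal]
    [Group.IsSolvable N] (hinv : ∀ a : A, ∀ n ∈ N, a • n ∈ N)
    (hco : (Nat.card A).Coprime (Nat.card N)) :
    FixedCosetsLift A N := by
  induction hn : Nat.card N using Nat.strong_induction_on generalizing G with
  | _ n ih =>
  subst hn
  by_cases hN : N = ⊥
  · subst hN
    have : IsMulCommutative (⊥ : Subgroup G) :=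
      Subgroup.commutator_self_eq_bot_iff.mp (Subgroup.commutator_bot_left ⊥)
    exact fixedCosetsLift_of_isMulCommutative hinv hco
  have hMN : ⁅N, N⁆ < N := Subgroup.commutator_lt_of_isSolvable hN
  have hinvM := smul_mem_commutator_of_smul_mem hinv
  have : Group.IsSolvable (⁅N, N⁆ : Subgroup G) :=
    Group.isSolvable_of_isSolvable_injective (Subgroup.inclusion_injective hMN.le)
  refine FixedCosetsLift.of_le hMN.le hinvM (ih _ ?_ hinvM ?_ rfl) ?_
  · exact lt_of_le_of_ne (Subgroup.card_le_of_le hMN.le)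
      fun h => hMN.ne (Subgroup.eq_of_le_of_card_ge hMN.le h.ge)
  · exact hco.coprime_dvd_right (Subgroup.card_dvd_of_le hMN.le)
  · let := QuotientGroup.mulDistribMulActionOfSmulMem _ hinvM
    have : IsMulCommutative (N.map (QuotientGroup.mk' ⁅N, N⁆)) := by
      rw [← Subgroup.commutator_self_eq_bot_iff, ← Subgroup.map_commutator,
        Subgroup.map_eq_bot_iff, QuotientGroup.ker_mk']
    refine fixedCosetsLift_of_isMulCommutative ?_ (hco.coprime_dvd_right (N.card_map_dvd _))
    rintro a _ ⟨g, hg, rfl⟩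
    exact ⟨a • g, hinv a g hg, rfl⟩

theorem stmt_11 (A G : Type*) [Group A] [Fintype A] [Group G] [Fintype G]
    [MulDistribMulAction A G] (N : Subgroup G) [N.Normal]
    (hinv : ∀ a : A, ∀ n ∈ N, a • n ∈ N)
    (hco : Nat.Coprime (Nat.card A) (Nat.card N))
    (hsolv : IsSolvable A ∨ IsSolvable N) :
    ∀ x : G, (∀ a : A, ((a • x : G) : G ⧸ N) = (x : G ⧸ N)) ↔
      ∃ y : G, (∀ a : A, a • y = y) ∧ (y : G ⧸ N) = (x : G ⧸ N) := by
  intro x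
  refine ⟨fun hx => ?_, fun ⟨y, hy, hyx⟩ a => ?_⟩
  · rcases hsolv with hA | hN
    · have : Group.IsSolvable A := hA
      exact fixedCosetsLift_of_coprime_of_isSolvable_left hinv hco x hx
    · have : Group.IsSolvable N := hN
      exact fixedCosetsLift_of_coprime_of_isSolvable_right hinv hco x hx
  · rw [← hyx, ← QuotientGroup.mk_smul_eq_mk_smul hinv hyx a, hy a]
end

section
/- Let p be a prime and G a finite group satisfying condition R(p) with parameter α (i.e., for every a ∈ G the p-part of |G : C_G(a)| lies in {1, p^α}). Let N be a normal subgroup of G whose order is coprime to p. Then the quotient G/N either satisfies R(p) with the same parameter α, or every conjugacy class of G/N has size coprime to p. -/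
open Subgroup

section

variable {G : Type*} [Group G] {p : ℕ} [Fact p.Prime]

theorem Subgroup.factorization_index_eq_of_sylow_le [Finite G] {K H : Subgroup G} (hKH : K ≤ H)
    (P : Sylow p H) (hP : (P : Subgroup H) ≤ K.subgroupOf H) :
    K.index.factorization p = H.index.factorization p := by
  have hrel : ¬ p ∣ K.relIndex H := fun hdvd ↦ P.not_dvd_index (hdvd.trans (index_dvd_of_le hP))
  have hrel₀ : K.relIndex H ≠ 0 := index_ne_zero_of_finite
  rw [← relIndex_mul_index hKH, Nat.factorization_mul hrel₀ index_ne_zero_of_finite,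
    Finsupp.add_apply, Nat.factorization_eq_zero_of_not_dvd hrel, zero_add]

theorem MonoidHom.exists_eq_and_le_centralizer_of_isPGroup {Q : Type*} [Group Q] {f : G →* Q}
    (hf : Function.Surjective f) (hker : (Nat.card f.ker).Coprime p) {P : Subgroup G}
    (hP : IsPGroup p P) {x : Q} (hx : ∀ g ∈ P, Commute (f g) x) :
    ∃ a, f a = x ∧ P ≤ centralizer {a} := by
  let _ : MulAction P (f ⁻¹' {x}) :=
    { smul g s := ⟨g * s * g⁻¹, by simp [show f s = x from s.2, (hx g g.2).eq]⟩
      one_smul s := by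
        ext
        change 1 * _ * 1⁻¹ = _
        simp
      mul_smul g h s := by
        ext
        change (g * h : G) * s * (g * h : G)⁻¹ = g * (h * s * h⁻¹) * g⁻¹
        simp [mul_assoc] }
  have hcard : ¬ p ∣ Nat.card (f ⁻¹' {x}) := by
    rw [Nat.card_congr (f.fiberEquivKerOfSurjective hf x)]
    exact (Nat.Prime.coprime_iff_not_dvd Fact.out).mp hker.symm
  obtain ⟨a, ha⟩ := hP.nonempty_fixed_point_of_prime_not_dvd_card _ hcard
  refine ⟨a, a.2, fun g hg ↦ mem_centralizer_singleton_iff.mpr ?_⟩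
  have hfix : (g : G) * a * (g : G)⁻¹ = a := congrArg Subtype.val (ha ⟨g, hg⟩)
  exact mul_inv_eq_iff_eq_mul.mp hfix

theorem QuotientGroup.exists_pPart_index_centralizer_eq [Finite G] {N : Subgroup G} [N.Normal]
    (hN : (Nat.card N).Coprime p) (x : G ⧸ N) :
    ∃ a : G, pPart p (centralizer {x}).index = pPart p (centralizer {a}).index := by
  set H := (centralizer {x}).comap (QuotientGroup.mk' N)
  obtain ⟨P⟩ : Nonempty (Sylow p H) := inferInstance
  have hPx : ∀ g ∈ (P : Subgroup H).map H.subtype, Commute (QuotientGroup.mk' N g) x := by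
    rintro _ ⟨g, -, rfl⟩
    exact mem_centralizer_singleton_iff.mp g.2
  obtain ⟨a, rfl, hPa⟩ := MonoidHom.exists_eq_and_le_centralizer_of_isPGroup
    (QuotientGroup.mk'_surjective N) (by rwa [QuotientGroup.ker_mk']) (P.isPGroup'.map _) hPx
  have hCH : centralizer {a} ≤ H := fun g hg ↦
    mem_centralizer_singleton_iff.mpr <| by
      rw [← map_mul, ← map_mul, mem_centralizer_singleton_iff.mp hg]
  refine ⟨a, congrArg (p ^ ·) ?_⟩
  rw [factorization_index_eq_of_sylow_le hCH P (map_le_iff_le_comap.mp hPa),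
    index_comap_of_surjective _ (QuotientGroup.mk'_surjective N)]

end

theorem stmt_13_general (G : Type*) [Group G] [Fintype G] (p : ℕ) (hp : p.Prime)
    (α : ℕ)
    (hR : ∀ a : G, pPart p (Subgroup.centralizer {a}).index ∈ ({1, p ^ α} : Set ℕ))
    (N : Subgroup G) [N.Normal] (hN : Nat.Coprime (Nat.card N) p) :
    (∀ x : G ⧸ N, pPart p (Subgroup.centralizer {x}).index ∈ ({1, p ^ α} : Set ℕ)) ∨
      (∀ x : G ⧸ N, Nat.Coprime (Subgroup.centralizer {x}).index p) := by
  have := Fact.mk hp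
  refine Or.inl fun x ↦ ?_
  obtain ⟨a, ha⟩ := QuotientGroup.exists_pPart_index_centralizer_eq hN x
  exact ha ▸ hR a

theorem stmt_13 (G : Type*) [Group G] [Fintype G] (p : ℕ) (hp : p.Prime)
    (α : ℕ) (hα : 0 < α)
    (hR : ∀ a : G, pPart p (Subgroup.centralizer {a}).index ∈ ({1, p ^ α} : Set ℕ))
    (N : Subgroup G) [N.Normal] (hN : Nat.Coprime (Nat.card N) p) :
    (∀ x : G ⧸ N, pPart p (Subgroup.centralizer {x}).index ∈ ({1, p ^ α} : Set ℕ)) ∨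
      (∀ x : G ⧸ N, Nat.Coprime (Subgroup.centralizer {x}).index p) :=
  stmt_13_general G p hp α hR N hN
end
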